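/- arXiv:2308.00649 — 2 statements merged into one kernel-verified Lean document; each statement's English description precedes it below -/
import Mathlib

section
/- Let (X_j) be i.i.d. random variables satisfying: X₁ has mean zero with P(|X₁| ≥ s) ≤ 2 exp(−s²/C₂²) for some C₂ > 0 and all s ≥ 0, and for a continuous nonnegative function η the log-moment generating function Λ̄(t₁,t₂) := log E[exp(t₁X₁ + t₂η(X₁))] is finite on ℝ × (−∞,T) for some 0 < T ≤ ∞. Then the sequence of random variables Z_n := n^{−1} Σ_{i=1}^n η(X_i) is exponentially tight with speed n: for every α < ∞ there exists a compact set K_α ⊂ [0,∞) such that limsup_{n→∞} n^{−1} log P(Z_n ∈ K_α^c) ≤ −α. -/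
open MeasureTheory Filter Topology ProbabilityTheory
open scoped ENNReal NNReal

noncomputable section

/-- The positive part of an extended real number, as an element of `ℝ≥0∞`. -/
def epos (x : EReal) : ℝ≥0∞ := if x = ⊤ then ⊤ else ENNReal.ofReal x.toReal

/-- The integral of an `EReal`-valued function (defined via positive and negative parts). -/
def eIntegral {α : Type*} [MeasurableSpace α] (μ : Measure α) (f : α → EReal) : EReal :=
  ((∫⁻ a, epos (f a) ∂μ : ℝ≥0∞) : EReal) - ((∫⁻ a, epos (-(f a)) ∂μ : ℝ≥0∞) : EReal)

/-- The log-moment generating function `Λ̄(t₁,t₂) = log E[exp (t₁ Z + t₂ η(Z))]` of a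
measure `μ` (the law of `Z`) together with a function `η`, with values in `EReal`. -/
def cgf2 (μ : Measure ℝ) (η : ℝ → ℝ) (t₁ t₂ : ℝ) : EReal :=
  ENNReal.log (∫⁻ x, ENNReal.ofReal (Real.exp (t₁ * x + t₂ * η x)) ∂μ)

/-- `Λ(u, b, c) = E[Λ̄(⟨u,g⟩ + b g₀, c)]`, where `g₀, g₁, g₂, …` are i.i.d. standard
Gaussians; since `⟨u,g⟩ + b g₀` is a centered Gaussian with variance `‖u‖₂² + b²`, this is
the expectation of `Λ̄(·, c)` under the Gaussian measure with that variance. -/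
def LamFn (μ : Measure ℝ) (η : ℝ → ℝ) (u : ℕ → ℝ) (b c : ℝ) : EReal :=
  eIntegral (gaussianReal 0 (Real.toNNReal ((∑' i, (u i)^2) + b^2)))
    (fun x => cgf2 μ η x c)

/-- The Legendre transform `Λ*(w,r,s) = sup_{(u,b,c) ∈ ℓ²×ℝ×ℝ} {⟨u,w⟩ + br + cs − Λ(u,b,c)}`. -/
def LamStar (μ : Measure ℝ) (η : ℝ → ℝ) (w : ℕ → ℝ) (r s : ℝ) : EReal :=
  ⨆ (u : ℕ → ℝ) (_ : Summable fun i => (u i)^2) (b : ℝ) (c : ℝ),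
    (((∑' i, u i * w i) + b * r + c * s : ℝ) : EReal) - LamFn μ η u b c

/-- The rate function `I(w,r,s) = Λ*(w, √(r² − ‖w‖₂²), s)`. -/
def Ifn (μ : Measure ℝ) (η : ℝ → ℝ) (w : ℕ → ℝ) (r s : ℝ) : EReal :=
  LamStar μ η w (Real.sqrt (r^2 - ∑' i, (w i)^2)) s
/-- First partial derivative operator. -/
def pd1 (F : ℝ → ℝ → ℝ) : ℝ → ℝ → ℝ := fun a b => deriv (fun x => F x b) a

/-- Second partial derivative operator. -/
def pd2 (F : ℝ → ℝ → ℝ) : ℝ → ℝ → ℝ := fun a b => deriv (fun y => F a y) b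

/-- `F(t₁,t₂)` is bounded by `C(t₂)(1 + |t₁|^e)` on `ℝ × (−∞,T)` for a continuous
positive function `C`. -/
def PolyBound (F : ℝ → ℝ → ℝ) (e : ℝ) (T : EReal) : Prop :=
  ∃ C : ℝ → ℝ, ContinuousOn C {c : ℝ | (c : EReal) < T} ∧
    (∀ c : ℝ, (c : EReal) < T → 0 < C c) ∧
    ∀ t₁ t₂ : ℝ, (t₂ : EReal) < T → |F t₁ t₂| ≤ C t₂ * (1 + |t₁| ^ e)

/-- Essential smoothness of a function `f : ℝ² → ℝ ∪ {∞}`: the interior of the effective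
domain is nonempty, `f` is differentiable there, and the gradient blows up along any
sequence in the interior converging to a boundary point of the domain. -/
def EssSmooth (f : ℝ × ℝ → EReal) : Prop :=
  (interior {q : ℝ × ℝ | f q ≠ ⊤}).Nonempty ∧
  (∀ q ∈ interior {q : ℝ × ℝ | f q ≠ ⊤},
      DifferentiableAt ℝ (fun q' => (f q').toReal) q) ∧
  ∀ (y : ℕ → ℝ × ℝ) (q₀ : ℝ × ℝ),
    (∀ j, y j ∈ interior {q : ℝ × ℝ | f q ≠ ⊤}) →
    Tendsto y atTop (nhds q₀) → q₀ ∈ frontier {q : ℝ × ℝ | f q ≠ ⊤} →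
    Tendsto (fun j => ‖fderiv ℝ (fun q' => (f q').toReal) (y j)‖) atTop atTop

/-- Assumption 2: the law `μ` of `X₁` is a probability measure with mean zero and
sub-Gaussian tails with constant `C₂`. -/
def Assumption2 (μ : Measure ℝ) (C₂ : ℝ) : Prop :=
  IsProbabilityMeasure μ ∧ (∫ x, x ∂μ) = 0 ∧ 0 < C₂ ∧
    ∀ s : ℝ, 0 ≤ s → μ {x : ℝ | s ≤ |x|} ≤ ENNReal.ofReal (2 * Real.exp (-(s^2) / C₂^2))

/-- Assumptions 3 and 4 on the log-moment generating function `Λ̄` of `(X₁, η(X₁))`: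
`η` is continuous, nonnegative and non-constant; `Λ̄` is finite on `ℝ × (−∞,T)` and
essentially smooth; the partial derivatives `∂₁^α ∂₂^β Λ̄` with `α + β ≤ 2` exist on
`ℝ × (−∞,T)` and satisfy the polynomial growth bounds `|∂₁^α∂₂^β Λ̄(t₁,t₂)| ≤
C̃(t₂)(1 + |t₁|^{2−α})`. -/
def Assumption34 (μ : Measure ℝ) (η : ℝ → ℝ) (T : EReal) : Prop :=
  Continuous η ∧ (∀ x, 0 ≤ η x) ∧ (∃ x y, η x ≠ η y) ∧ 0 < T ∧
  (∀ t₁ t₂ : ℝ, (t₂ : EReal) < T → cgf2 μ η t₁ t₂ ≠ ⊤) ∧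
  EssSmooth (fun q => cgf2 μ η q.1 q.2) ∧
  (∀ t₁ t₂ : ℝ, (t₂ : EReal) < T →
      DifferentiableAt ℝ (fun x => (cgf2 μ η x t₂).toReal) t₁ ∧
      DifferentiableAt ℝ (fun y => (cgf2 μ η t₁ y).toReal) t₂ ∧
      DifferentiableAt ℝ (fun x => pd1 (fun a b => (cgf2 μ η a b).toReal) x t₂) t₁ ∧
      DifferentiableAt ℝ (fun y => pd2 (fun a b => (cgf2 μ η a b).toReal) t₁ y) t₂ ∧
      DifferentiableAt ℝ (fun x => pd2 (fun a b => (cgf2 μ η a b).toReal) x t₂) t₁) ∧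
  PolyBound (fun a b => (cgf2 μ η a b).toReal) 2 T ∧
  PolyBound (pd1 (fun a b => (cgf2 μ η a b).toReal)) 1 T ∧
  PolyBound (pd2 (fun a b => (cgf2 μ η a b).toReal)) 2 T ∧
  PolyBound (pd1 (pd1 (fun a b => (cgf2 μ η a b).toReal))) 0 T ∧
  PolyBound (pd1 (pd2 (fun a b => (cgf2 μ η a b).toReal))) 1 T ∧
  PolyBound (pd2 (pd2 (fun a b => (cgf2 μ η a b).toReal))) 2 T

/-- `(X_j)` is an i.i.d. sequence on `(Ω, P)` with common law `μ`. -/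
def IsIIDWithLaw {Ω : Type*} [MeasurableSpace Ω] (P : Measure Ω) (X : ℕ → Ω → ℝ)
    (μ : Measure ℝ) : Prop :=
  (∀ j, Measurable (X j)) ∧ iIndepFun X P ∧
    ∀ j, Measure.map (X j) P = μ

/-!
For some `0 < t < T` the moment `m = E[exp (t η(X₁))]` is finite, so the Chernoff bound gives
`P(Z_n > M) ≤ exp (-n (t M - log m))`; since `Z_n ≥ 0`, `K = [0, M]` with `t M - log m = α`
works.
-/

namespace ProbabilityTheory

variable {Ω : Type*} [MeasurableSpace Ω] {P : Measure Ω}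

theorem measure_sum_ge_le_exp_of_identDistrib {Y : ℕ → Ω → ℝ} (hind : iIndepFun Y P)
    (hmeas : ∀ i, Measurable (Y i)) (hident : ∀ i, IdentDistrib (Y i) (Y 0) P P)
    {t : ℝ} (ht : 0 ≤ t) (hint : Integrable (fun ω => Real.exp (t * Y 0 ω)) P)
    (M : ℝ) (n : ℕ) :
    P {ω | n * M ≤ ∑ i ∈ Finset.range n, Y i ω}
      ≤ ENNReal.ofReal (Real.exp (n * (Real.log (mgf (Y 0) P t) - t * M))) := by
  have := hind.isProbabilityMeasure
  have hint_sum : Integrable (fun ω => Real.exp (t * (∑ i ∈ Finset.range n, Y i) ω)) P :=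
    hind.integrable_exp_mul_sum hmeas fun i _ => (hident i).symm.comp
      (measurable_const_mul t).exp |>.integrable_snd hint
  have hmgf : mgf (∑ i ∈ Finset.range n, Y i) P t = mgf (Y 0) P t ^ n := by
    rw [hind.mgf_sum hmeas, Finset.prod_eq_pow_card fun i _ =>
      mgf_congr_of_identDistrib _ _ (hident i) t, Finset.card_range]
  have hexp : Real.exp (-t * (n * M)) * mgf (Y 0) P t ^ n
      = Real.exp (n * (Real.log (mgf (Y 0) P t) - t * M)) := by
    rw [← Real.exp_log (pow_pos (mgf_pos hint) n), ← Real.exp_add, Real.log_pow]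
    ring_nf
  have hchernoff := measure_ge_le_exp_mul_mgf (n * M) ht hint_sum
  rw [hmgf, hexp, measureReal_def] at hchernoff
  simp only [Finset.sum_apply] at hchernoff
  rw [← ENNReal.ofReal_toReal (measure_ne_top P _)]
  exact ENNReal.ofReal_le_ofReal hchernoff

end ProbabilityTheory

theorem limsup_inv_mul_log_le_of_le_exp {u : ℕ → ℝ≥0∞} {c : ℝ}
    (h : ∀ᶠ n in atTop, u n ≤ ENNReal.ofReal (Real.exp (n * c))) :
    limsup (fun n : ℕ => ((n : ℝ)⁻¹ : EReal) * ENNReal.log (u n)) atTop ≤ (c : EReal) := by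
  refine limsup_le_of_le (by isBoundedDefault) ?_
  filter_upwards [h, eventually_ge_atTop 1] with n hn hn1
  have hn0 : (0 : ℝ) < n := by exact_mod_cast hn1
  have hlog : ENNReal.log (u n) ≤ ((n * c : ℝ) : EReal) := by
    simpa [ENNReal.log_ofReal_of_pos (Real.exp_pos _)] using ENNReal.log_monotone hn
  calc ((n : ℝ)⁻¹ : EReal) * ENNReal.log (u n)
      ≤ (((n : ℝ)⁻¹ : ℝ) : EReal) * ((n * c : ℝ) : EReal) := by
        rw [EReal.coe_inv]
        exact mul_le_mul_of_nonneg_left hlog (EReal.coe_nonneg.2 (inv_nonneg.2 hn0.le))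
    _ = (c : EReal) := by
        rw [← EReal.coe_mul, inv_mul_cancel_left₀ hn0.ne']

theorem integrable_exp_of_cgf2_ne_top {μ : Measure ℝ} {η : ℝ → ℝ} (hη : Measurable η)
    {t₁ t₂ : ℝ} (h : cgf2 μ η t₁ t₂ ≠ ⊤) :
    Integrable (fun x => Real.exp (t₁ * x + t₂ * η x)) μ := by
  refine ⟨by fun_prop, ?_⟩
  rw [hasFiniteIntegral_iff_ofReal (.of_forall fun x => (Real.exp_pos _).le)]
  refine lt_top_iff_ne_top.2 fun htop => h ?_
  rw [cgf2, htop, ENNReal.log_top]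

theorem exponential_tightness_of_eta_averages_general
    {Ω : Type*} [MeasurableSpace Ω]
    (P : Measure Ω)
    (X : ℕ → Ω → ℝ) (μ : Measure ℝ) (hiid : IsIIDWithLaw P X μ)
    (η : ℝ → ℝ) (hηcont : Continuous η) (hηnonneg : ∀ x, 0 ≤ η x)
    (T : EReal) (hT : 0 < T)
    (hfin : ∀ t₁ t₂ : ℝ, (t₂ : EReal) < T → cgf2 μ η t₁ t₂ ≠ ⊤) :
    ∀ α : ℝ, ∃ K : Set ℝ, IsCompact K ∧ K ⊆ Set.Ici 0 ∧
      limsup (fun n : ℕ => ((n : ℝ)⁻¹ : EReal) *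
        ENNReal.log (P {ω | ((n : ℝ)⁻¹ * ∑ i ∈ Finset.range n, η (X i ω)) ∈ Kᶜ}))
        atTop ≤ ((-α : ℝ) : EReal) := by
  obtain ⟨hXmeas, hXindep, hXlaw⟩ := hiid
  intro α
  obtain ⟨t, ht0, htT⟩ := EReal.exists_between_coe_real hT
  rw [EReal.coe_pos] at ht0
  set Y : ℕ → Ω → ℝ := fun i => η ∘ X i
  have hident : ∀ i, IdentDistrib (Y i) (Y 0) P P := fun i =>
    IdentDistrib.comp ⟨(hXmeas i).aemeasurable, (hXmeas 0).aemeasurable, by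
      rw [hXlaw i, hXlaw 0]⟩ hηcont.measurable
  have hint : Integrable (fun ω => Real.exp (t * Y 0 ω)) P := by
    have h := integrable_exp_of_cgf2_ne_top hηcont.measurable (hfin 0 t htT)
    simp only [zero_mul, zero_add] at h
    rw [← hXlaw 0] at h
    exact (integrable_map_measure h.1 (hXmeas 0).aemeasurable).1 h
  set M := (Real.log (mgf (Y 0) P t) + α) / t
  refine ⟨Set.Icc 0 M, isCompact_Icc, Set.Icc_subset_Ici_self, ?_⟩
  refine limsup_inv_mul_log_le_of_le_exp (eventually_ge_atTop 1 |>.mono fun n hn => ?_)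
  have hn0 : (0 : ℝ) < n := by exact_mod_cast hn
  have hsub : {ω | ((n : ℝ)⁻¹ * ∑ i ∈ Finset.range n, η (X i ω)) ∈ (Set.Icc 0 M)ᶜ}
      ⊆ {ω | n * M ≤ ∑ i ∈ Finset.range n, Y i ω} := fun ω hω => by
    have hM := not_and.1 hω <| mul_nonneg (inv_nonneg.2 hn0.le) <|
      Finset.sum_nonneg fun i _ => hηnonneg (X i ω)
    rw [not_le, lt_inv_mul_iff₀ hn0] at hM
    exact hM.le
  calc _ ≤ _ := measure_mono hsub
    _ ≤ _ := measure_sum_ge_le_exp_of_identDistrib (hXindep.comp _ fun _ => hηcont.measurable)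
        (fun i => hηcont.measurable.comp (hXmeas i)) hident ht0.le hint M n
    _ = ENNReal.ofReal (Real.exp (n * -α)) := by
        congr 3
        rw [mul_div_cancel₀ _ ht0.ne']
        ring

/-- **Exponential tightness of `Z_n = n⁻¹ ∑ η(X_i)`** (Lemma 2.12).  Under Assumptions 2
and 3, the sequence `Z_n` is exponentially tight with speed `n`: for every `α < ∞` there
is a compact set `K_α ⊆ [0,∞)` with `limsup n⁻¹ log P(Z_n ∈ K_αᶜ) ≤ −α`. -/
theorem exponential_tightness_of_eta_averages
    {Ω : Type*} [MeasurableSpace Ω]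
    (P : Measure Ω) (hP : IsProbabilityMeasure P)
    (X : ℕ → Ω → ℝ) (μ : Measure ℝ) (hiid : IsIIDWithLaw P X μ)
    (C₂ : ℝ) (hA2 : Assumption2 μ C₂)
    (η : ℝ → ℝ) (hηcont : Continuous η) (hηnonneg : ∀ x, 0 ≤ η x)
    (T : EReal) (hT : 0 < T)
    (hfin : ∀ t₁ t₂ : ℝ, (t₂ : EReal) < T → cgf2 μ η t₁ t₂ ≠ ⊤) :
    ∀ α : ℝ, ∃ K : Set ℝ, IsCompact K ∧ K ⊆ Set.Ici 0 ∧
      limsup (fun n : ℕ => ((n : ℝ)⁻¹ : EReal) *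
        ENNReal.log (P {ω | ((n : ℝ)⁻¹ * ∑ i ∈ Finset.range n, η (X i ω)) ∈ Kᶜ}))
        atTop ≤ ((-α : ℝ) : EReal) :=
  exponential_tightness_of_eta_averages_general P X μ hiid η hηcont hηnonneg T hT hfin
end
end

section
/- Let μ be the law of a mean-zero random variable satisfying: P(|X| ≥ s) ≤ 2 exp(−s²/C₂²) for some C₂ > 0, and for a continuous nonnegative η the function Λ̄(t₁,t₂) := log ∫ exp(t₁x + t₂η(x)) dμ(x) is finite on ℝ × (−∞,T) with second-order partial derivatives bounded as |∂₁^α∂₂^β Λ̄(t₁,t₂)| ≤ C̃(t₂)(1+|t₁|^{2−α}) for α+β ≤ 2 and a continuous C̃. For (s₁,s₂) ∈ ℝ × (−∞,T), define the tilted measure μ̃_{s₁,s₂} by dμ̃_{s₁,s₂}/dμ(x) = exp(s₁x + s₂η(x) − Λ̄(s₁,s₂)). Then for every s₂ ∈ (−∞,T) there exists a constant C = C(s₂) > 0 such that for every s₁ ∈ ℝ, a random variable X̃ with law μ̃_{s₁,s₂} satisfies P(|X̃ − E[X̃]| > t) ≤ 2 exp(−t²/C²) for all t ≥ 0. -/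
open MeasureTheory Filter Topology ProbabilityTheory
open scoped ENNReal NNReal

noncomputable section

/-- The exponentially tilted measure `μ̃_{s₁,s₂}` with
`dμ̃/dμ(x) = exp(s₁ x + s₂ η(x) − Λ̄(s₁,s₂))`. -/
def tiltedMeas (μ : Measure ℝ) (η : ℝ → ℝ) (s₁ s₂ : ℝ) : Measure ℝ :=
  μ.withDensity fun x =>
    ENNReal.ofReal (Real.exp (s₁ * x + s₂ * η x - (cgf2 μ η s₁ s₂).toReal))

/-! Write `Λ(c) = Λ̄(c, s₂)`. The tilted measure `μ̃_{s₁,s₂}` has moment generating function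
`c ↦ exp (Λ(s₁ + c) - Λ(s₁))`, and the bound `Λ'' ≤ 2 C̃(s₂)` gives
`Λ(s₁ + c) - Λ(s₁) - c Λ'(s₁) ≤ C̃(s₂) c²` uniformly in `s₁`. Hence `X̃ - Λ'(s₁)` has a
sub-Gaussian moment generating function with variance proxy `2 C̃(s₂)`. Such a variable is
automatically centred, so `Λ'(s₁) = E[X̃]`, and the two-sided Chernoff bound gives the claim with
`C² = 4 C̃(s₂)`. -/

open Real

lemma ConvexOn.add_deriv_mul_sub_le {f : ℝ → ℝ} (hf : ConvexOn ℝ Set.univ f) {x : ℝ}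
    (hfx : DifferentiableAt ℝ f x) (y : ℝ) : f x + deriv f x * (y - x) ≤ f y := by
  rcases lt_trichotomy x y with hxy | rfl | hxy
  · have h := hf.deriv_le_slope trivial trivial hxy hfx
    rw [slope_def_field, le_div_iff₀ (sub_pos.2 hxy)] at h
    linarith
  · simp
  · have h := hf.slope_le_deriv trivial trivial hxy hfx
    rw [slope_def_field, div_le_iff₀ (sub_pos.2 hxy)] at h
    linarith

lemma sub_sub_deriv_mul_le_of_deriv2_le {g : ℝ → ℝ} {K : ℝ} (hg : Differentiable ℝ g)
    (hg' : Differentiable ℝ (deriv g)) (hK : ∀ x, deriv (deriv g) x ≤ K) (s l : ℝ) :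
    g (s + l) - g s - l * deriv g s ≤ K * l ^ 2 / 2 := by
  set ψ : ℝ → ℝ := fun x => K * x ^ 2 / 2 - g x
  have hψ' : deriv ψ = fun x => K * x - deriv g x := funext fun x =>
    (((hasDerivAt_pow 2 x).const_mul K).div_const 2 |>.sub (hg x).hasDerivAt).deriv.trans
      (by push_cast; ring)
  have hψconv : ConvexOn ℝ Set.univ ψ := by
    refine convexOn_univ_of_deriv2_nonneg (by fun_prop) (by rw [hψ']; fun_prop) fun x => ?_
    have hψ'' : HasDerivAt (fun x => K * x - deriv g x) (K - deriv (deriv g) x) x :=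
      (((hasDerivAt_id x).const_mul K).sub (hg' x).hasDerivAt).congr_deriv (by simp)
    rw [Function.iterate_succ_apply, Function.iterate_one, hψ', hψ''.deriv]
    linarith [hK x]
  have := hψconv.add_deriv_mul_sub_le (x := s) (by fun_prop) (s + l)
  simp only [hψ', ψ] at this
  linarith

namespace ProbabilityTheory

variable {Ω : Type*} {mΩ : MeasurableSpace Ω} {μ : Measure Ω} {X : Ω → ℝ}

lemma hasSubgaussianMGF_sub_deriv_of_mgf_eq {L : ℝ → ℝ} {K : ℝ≥0} (hL : Differentiable ℝ L)
    (hL' : Differentiable ℝ (deriv L)) (hK : ∀ x, deriv (deriv L) x ≤ K) {s : ℝ}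
    (hint : ∀ t, Integrable (fun ω => exp (t * X ω)) μ)
    (hmgf : ∀ t, mgf X μ t = exp (L (s + t) - L s)) :
    HasSubgaussianMGF (fun ω => X ω - deriv L s) K μ where
  integrable_exp_mul t := by
    simpa [mul_sub, exp_sub, div_eq_mul_inv] using (hint t).mul_const (exp (t * deriv L s))⁻¹
  mgf_le t := by
    simp_rw [sub_eq_add_neg (X _)]
    rw [mgf_add_const, hmgf, ← exp_add, exp_le_exp]
    have := sub_sub_deriv_mul_le_of_deriv2_le hL hL' hK s t
    linarith

namespace HasSubgaussianMGF

variable {c : ℝ≥0}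

lemma integral_eq_zero [IsProbabilityMeasure μ] (h : HasSubgaussianMGF X c μ) : μ[X] = 0 := by
  have h0 : (0 : ℝ) ∈ interior (integrableExpSet X μ) := by
    simp [h.integrableExpSet_eq_univ]
  have hmax : IsLocalMax (fun t => mgf X μ t - exp (c * t ^ 2 / 2)) 0 :=
    Filter.Eventually.of_forall fun t => by simpa [mgf_zero] using h.mgf_le t
  have hderiv : HasDerivAt (fun t => mgf X μ t - exp (c * t ^ 2 / 2)) (μ[X] - 0) 0 := by
    refine (hasDerivAt_mgf h0).congr_deriv (by simp) |>.sub ?_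
    simpa using ((hasDerivAt_pow 2 (0 : ℝ)).const_mul (c : ℝ) |>.div_const 2).exp
  simpa using hmax.hasDerivAt_eq_zero hderiv

lemma measure_abs_ge_le [IsFiniteMeasure μ] (h : HasSubgaussianMGF X c μ) {ε : ℝ}
    (hε : 0 ≤ ε) :
    μ {ω | ε ≤ |X ω|} ≤ ENNReal.ofReal (2 * exp (-ε ^ 2 / (2 * c))) := by
  have hsplit : {ω | ε ≤ |X ω|} = {ω | ε ≤ X ω} ∪ {ω | ε ≤ (-X) ω} := by
    ext ω
    simp only [Set.mem_ofPred_eq, Set.mem_union, Pi.neg_apply, le_abs, le_neg]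
  rw [← ofReal_measureReal, two_mul]
  refine ENNReal.ofReal_le_ofReal ?_
  calc μ.real {ω | ε ≤ |X ω|} ≤ μ.real {ω | ε ≤ X ω} + μ.real {ω | ε ≤ (-X) ω} :=
        hsplit ▸ measureReal_union_le _ _
    _ ≤ _ := add_le_add (h.measure_ge_le hε) (h.neg.measure_ge_le hε)

lemma measure_abs_sub_integral_gt_le [IsProbabilityMeasure μ] {a ε : ℝ}
    (h : HasSubgaussianMGF (fun ω => X ω - a) c μ) (hε : 0 ≤ ε) :
    μ {ω | ε < |X ω - μ[X]|} ≤ ENNReal.ofReal (2 * exp (-ε ^ 2 / (2 * c))) := by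
  have hXa : Integrable (fun ω => X ω - a) μ := h.integrable
  have hX : Integrable X μ :=
    (hXa.add (integrable_const a)).congr (ae_of_all _ fun ω => sub_add_cancel (X ω) a)
  have hmean : μ[X] = a := by
    have := h.integral_eq_zero
    rw [integral_sub hX (integrable_const a)] at this
    simp only [integral_const, probReal_univ, smul_eq_mul, one_mul] at this
    linarith
  rw [hmean]
  refine (measure_mono fun ω hω => ?_).trans (h.measure_abs_ge_le hε)
  exact (show ε < |X ω - a| from hω).le

end HasSubgaussianMGF

end ProbabilityTheory

lemma lintegral_exp_eq_exp_cgf2 {μ : Measure ℝ} [NeZero μ] {η : ℝ → ℝ} (hη : Measurable η)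
    {t₁ t₂ : ℝ} (h : cgf2 μ η t₁ t₂ ≠ ⊤) :
    ∫⁻ x, ENNReal.ofReal (exp (t₁ * x + t₂ * η x)) ∂μ =
      ENNReal.ofReal (exp (cgf2 μ η t₁ t₂).toReal) := by
  set Z := ∫⁻ x, ENNReal.ofReal (exp (t₁ * x + t₂ * η x)) ∂μ
  have hZ0 : Z ≠ 0 := by
    rw [Ne, lintegral_eq_zero_iff (by fun_prop)]
    intro hzero
    obtain ⟨x, hx⟩ := hzero.exists
    exact (ENNReal.ofReal_pos.2 (exp_pos _)).ne' hx
  have hZtop : Z ≠ ⊤ := by simpa [cgf2] using h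
  rw [cgf2, ENNReal.log_pos_real hZ0 hZtop, EReal.toReal_coe,
    exp_log (ENNReal.toReal_pos hZ0 hZtop), ENNReal.ofReal_toReal hZtop]

lemma lintegral_exp_mul_tiltedMeas {μ : Measure ℝ} [NeZero μ] {η : ℝ → ℝ} (hη : Measurable η)
    {s₁ s₂ : ℝ} (c : ℝ) (h : cgf2 μ η (s₁ + c) s₂ ≠ ⊤) :
    ∫⁻ x, ENNReal.ofReal (exp (c * x)) ∂tiltedMeas μ η s₁ s₂ =
      ENNReal.ofReal (exp ((cgf2 μ η (s₁ + c) s₂).toReal - (cgf2 μ η s₁ s₂).toReal)) := by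
  have hdens : ∀ x, ENNReal.ofReal (exp (s₁ * x + s₂ * η x - (cgf2 μ η s₁ s₂).toReal)) *
      ENNReal.ofReal (exp (c * x)) = ENNReal.ofReal (exp ((s₁ + c) * x + s₂ * η x)) *
        ENNReal.ofReal (exp (-(cgf2 μ η s₁ s₂).toReal)) := fun x => by
    rw [← ENNReal.ofReal_mul (exp_nonneg _), ← ENNReal.ofReal_mul (exp_nonneg _), ← exp_add,
      ← exp_add]
    ring_nf
  rw [tiltedMeas, lintegral_withDensity_eq_lintegral_mul _ (by fun_prop) (by fun_prop)]
  simp only [Pi.mul_apply, hdens]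
  rw [lintegral_mul_const _ (by fun_prop), lintegral_exp_eq_exp_cgf2 hη h,
    ← ENNReal.ofReal_mul (exp_nonneg _), ← exp_add, sub_eq_add_neg]

lemma isProbabilityMeasure_tiltedMeas {μ : Measure ℝ} [NeZero μ] {η : ℝ → ℝ}
    (hη : Measurable η) {s₁ s₂ : ℝ} (h : cgf2 μ η s₁ s₂ ≠ ⊤) :
    IsProbabilityMeasure (tiltedMeas μ η s₁ s₂) := by
  constructor
  simpa using lintegral_exp_mul_tiltedMeas hη 0 (by simpa using h)

lemma integrable_exp_mul_tiltedMeas {μ : Measure ℝ} [NeZero μ] {η : ℝ → ℝ}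
    (hη : Measurable η) {s₁ s₂ c : ℝ} (h : cgf2 μ η (s₁ + c) s₂ ≠ ⊤) :
    Integrable (fun x => exp (c * x)) (tiltedMeas μ η s₁ s₂) := by
  rw [← lintegral_ofReal_ne_top_iff_integrable (by fun_prop) (ae_of_all _ fun _ => exp_nonneg _),
    lintegral_exp_mul_tiltedMeas hη c h]
  exact ENNReal.ofReal_ne_top

lemma mgf_tiltedMeas {μ : Measure ℝ} [NeZero μ] {η : ℝ → ℝ}
    (hη : Measurable η) {s₁ s₂ c : ℝ} (h : cgf2 μ η (s₁ + c) s₂ ≠ ⊤) :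
    mgf (fun x => x) (tiltedMeas μ η s₁ s₂) c =
      exp ((cgf2 μ η (s₁ + c) s₂).toReal - (cgf2 μ η s₁ s₂).toReal) := by
  rw [mgf, integral_eq_lintegral_of_nonneg_ae (ae_of_all _ fun _ => exp_nonneg _) (by fun_prop),
    lintegral_exp_mul_tiltedMeas hη c h, ENNReal.toReal_ofReal (exp_nonneg _)]

theorem tilted_measure_subgaussian_general
    (μ : Measure ℝ) (C₂ : ℝ) (hA2 : Assumption2 μ C₂)
    (η : ℝ → ℝ) (hηcont : Continuous η)
    (T : EReal)
    (hfin : ∀ t₁ t₂ : ℝ, (t₂ : EReal) < T → cgf2 μ η t₁ t₂ ≠ ⊤)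
    (hderiv : ∀ t₁ t₂ : ℝ, (t₂ : EReal) < T →
      DifferentiableAt ℝ (fun x => (cgf2 μ η x t₂).toReal) t₁ ∧
      DifferentiableAt ℝ (fun y => (cgf2 μ η t₁ y).toReal) t₂ ∧
      DifferentiableAt ℝ (fun x => pd1 (fun a b => (cgf2 μ η a b).toReal) x t₂) t₁ ∧
      DifferentiableAt ℝ (fun y => pd2 (fun a b => (cgf2 μ η a b).toReal) t₁ y) t₂ ∧
      DifferentiableAt ℝ (fun x => pd2 (fun a b => (cgf2 μ η a b).toReal) x t₂) t₁)
    (hb3 : PolyBound (pd1 (pd1 (fun a b => (cgf2 μ η a b).toReal))) 0 T) :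
    ∀ s₂ : ℝ, (s₂ : EReal) < T →
      ∃ C : ℝ, 0 < C ∧ ∀ s₁ t : ℝ, 0 ≤ t →
        tiltedMeas μ η s₁ s₂
            {x | t < |x - ∫ y, y ∂(tiltedMeas μ η s₁ s₂)|} ≤
          ENNReal.ofReal (2 * Real.exp (-t^2 / C^2)) := by
  intro s₂ hs₂
  have : IsProbabilityMeasure μ := hA2.1
  obtain ⟨C₃, -, hC₃pos, hC₃⟩ := hb3
  set L : ℝ → ℝ := fun x => (cgf2 μ η x s₂).toReal
  have hKpos : 0 < 2 * C₃ s₂ := by linarith [hC₃pos s₂ hs₂]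
  set K : ℝ≥0 := ⟨2 * C₃ s₂, hKpos.le⟩
  have hKdef : (K : ℝ) = 2 * C₃ s₂ := rfl
  have hK : ∀ x, deriv (deriv L) x ≤ K := fun x => by
    have := (le_abs_self _).trans (hC₃ x s₂ hs₂)
    rw [Real.rpow_zero] at this
    rw [hKdef]
    exact this.trans_eq (by ring)
  refine ⟨√(2 * K), Real.sqrt_pos.2 (by rw [hKdef]; linarith), fun s₁ t ht => ?_⟩
  have := isProbabilityMeasure_tiltedMeas hηcont.measurable (hfin s₁ s₂ hs₂)
  have hsg : HasSubgaussianMGF (fun x => x - deriv L s₁) K (tiltedMeas μ η s₁ s₂) :=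
    hasSubgaussianMGF_sub_deriv_of_mgf_eq (fun x => (hderiv x s₂ hs₂).1) (fun x => (hderiv x s₂ hs₂).2.2.1)
      hK (fun c => integrable_exp_mul_tiltedMeas hηcont.measurable (hfin _ s₂ hs₂))
      (fun c => mgf_tiltedMeas hηcont.measurable (hfin _ s₂ hs₂))
  rw [Real.sq_sqrt (by positivity)]
  exact hsg.measure_abs_sub_integral_gt_le ht

/-- **Uniform sub-Gaussianity of tilted measures** (Lemma 7.1).  For every `s₂ < T`
there is `C = C(s₂) > 0` such that for every `s₁ ∈ ℝ`, a random variable `X̃` with the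
tilted law `μ̃_{s₁,s₂}` satisfies `P(|X̃ − E[X̃]| > t) ≤ 2 exp(−t²/C²)` for all `t ≥ 0`. -/
theorem tilted_measure_subgaussian
    (μ : Measure ℝ) (C₂ : ℝ) (hA2 : Assumption2 μ C₂)
    (η : ℝ → ℝ) (hηcont : Continuous η) (hηnonneg : ∀ x, 0 ≤ η x)
    (T : EReal)
    (hfin : ∀ t₁ t₂ : ℝ, (t₂ : EReal) < T → cgf2 μ η t₁ t₂ ≠ ⊤)
    (hderiv : ∀ t₁ t₂ : ℝ, (t₂ : EReal) < T →
      DifferentiableAt ℝ (fun x => (cgf2 μ η x t₂).toReal) t₁ ∧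
      DifferentiableAt ℝ (fun y => (cgf2 μ η t₁ y).toReal) t₂ ∧
      DifferentiableAt ℝ (fun x => pd1 (fun a b => (cgf2 μ η a b).toReal) x t₂) t₁ ∧
      DifferentiableAt ℝ (fun y => pd2 (fun a b => (cgf2 μ η a b).toReal) t₁ y) t₂ ∧
      DifferentiableAt ℝ (fun x => pd2 (fun a b => (cgf2 μ η a b).toReal) x t₂) t₁)
    (hb0 : PolyBound (fun a b => (cgf2 μ η a b).toReal) 2 T)
    (hb1 : PolyBound (pd1 (fun a b => (cgf2 μ η a b).toReal)) 1 T)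
    (hb2 : PolyBound (pd2 (fun a b => (cgf2 μ η a b).toReal)) 2 T)
    (hb3 : PolyBound (pd1 (pd1 (fun a b => (cgf2 μ η a b).toReal))) 0 T)
    (hb4 : PolyBound (pd1 (pd2 (fun a b => (cgf2 μ η a b).toReal))) 1 T)
    (hb5 : PolyBound (pd2 (pd2 (fun a b => (cgf2 μ η a b).toReal))) 2 T) :
    ∀ s₂ : ℝ, (s₂ : EReal) < T →
      ∃ C : ℝ, 0 < C ∧ ∀ s₁ t : ℝ, 0 ≤ t →
        tiltedMeas μ η s₁ s₂
            {x | t < |x - ∫ y, y ∂(tiltedMeas μ η s₁ s₂)|} ≤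
          ENNReal.ofReal (2 * Real.exp (-t^2 / C^2)) :=
  tilted_measure_subgaussian_general μ C₂ hA2 η hηcont T hfin hderiv hb3
end
end
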